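/- For every positive integer i and real α, the function x ↦ x^α · |ψ^(i)(x)| is strictly increasing on (0, ∞) if and only if α ≥ i + 1. -/

import Mathlib

/-!
For `x > 0`, `log Γ` is the limit of the Bohr–Mollerup sequence `logGammaSeq`, whose derivatives
converge uniformly near `x`; hence `ψ x = -γ + ∑ₘ (1/(m+1) - 1/(x+m))`, and differentiating termwise,
`ψ⁽ⁱ⁾ x = (-1)^(i+1) i! ∑ₙ (x+n)^(-(i+1))`. So `x^(i+1) |ψ⁽ⁱ⁾ x| = i! ∑ₙ (x/(x+n))^(i+1)` is strictly
increasing and at least `i!` (its `n = 0` term is `1`). Multiplying by `x^(α-i-1)` keeps it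
strictly increasing when `α ≥ i+1`; when `α < i+1` the product is at least `x^(α-i-1)`, which
blows up as `x → 0⁺`.
-/

noncomputable def digamma : ℝ → ℝ := deriv (fun x => Real.log (Real.Gamma x))

noncomputable def polygamma (i : ℕ) : ℝ → ℝ := iteratedDeriv i digamma

open Real Filter Topology Set

noncomputable def hurwitzSum (k : ℕ) (x : ℝ) : ℝ := ∑' n : ℕ, ((x + n) ^ k)⁻¹

theorem summable_inv_add_nat_pow {k : ℕ} (hk : 2 ≤ k) {x : ℝ} (hx : 0 < x) :
    Summable fun n : ℕ => ((x + n) ^ k)⁻¹ := by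
  have h := (Real.summable_one_div_nat_add_rpow x k).2 (by exact_mod_cast hk)
  refine h.congr fun n => ?_
  rw [abs_of_pos (by positivity), Real.rpow_natCast, one_div, add_comm]

theorem hasDerivAt_inv_add_pow (k : ℕ) (c : ℝ) {y : ℝ} (hy : y + c ≠ 0) :
    HasDerivAt (fun z : ℝ => ((z + c) ^ k)⁻¹) (-k * ((y + c) ^ (k + 1))⁻¹) y := by
  have h := (((hasDerivAt_id y).add_const c).fun_pow k).fun_inv (pow_ne_zero k hy)
  refine h.congr_deriv ?_
  rcases k with _ | k
  · simp
  · field_simp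
    simp only [id, add_tsub_cancel_right]
    ring

theorem hurwitzSum_nonneg (k : ℕ) {x : ℝ} (hx : 0 < x) : 0 ≤ hurwitzSum k x :=
  tsum_nonneg fun n => by positivity

theorem hasDerivAt_hurwitzSum {k : ℕ} (hk : 2 ≤ k) {x : ℝ} (hx : 0 < x) :
    HasDerivAt (hurwitzSum k) (-k * hurwitzSum (k + 1) x) x := by
  have hx2 : 0 < x / 2 := by linarith
  have h := hasDerivAt_tsum_of_isPreconnected
    (u := fun n : ℕ => (k : ℝ) * ((x / 2 + n) ^ (k + 1))⁻¹)
    (g := fun (n : ℕ) (z : ℝ) => ((z + n) ^ k)⁻¹)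
    (g' := fun (n : ℕ) (z : ℝ) => -k * ((z + n) ^ (k + 1))⁻¹)
    ((summable_inv_add_nat_pow (by omega : 2 ≤ k + 1) hx2).mul_left (k : ℝ))
    isOpen_Ioi isPreconnected_Ioi
    (fun n y (hy : x / 2 < y) => hasDerivAt_inv_add_pow k n (by linarith [hx2.trans hy, n.cast_nonneg (α := ℝ)]))
    (fun n y (hy : x / 2 < y) => ?_) (half_lt_self hx) (summable_inv_add_nat_pow hk hx) (half_lt_self hx)
  · rwa [tsum_mul_left] at h
  · have hy0 : 0 < y := hx2.trans hy
    rw [norm_mul, norm_neg, Real.norm_natCast, Real.norm_of_nonneg (by positivity)]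
    gcongr

theorem one_le_pow_mul_hurwitzSum {k : ℕ} (hk : 2 ≤ k) {x : ℝ} (hx : 0 < x) :
    1 ≤ x ^ k * hurwitzSum k x := by
  have h : (x ^ k)⁻¹ ≤ hurwitzSum k x := by
    simpa [hurwitzSum] using (summable_inv_add_nat_pow hk hx).le_tsum 0 fun n _ => by positivity
  calc 1 = x ^ k * (x ^ k)⁻¹ := (mul_inv_cancel₀ (by positivity)).symm
    _ ≤ x ^ k * hurwitzSum k x := by gcongr

theorem strictMonoOn_pow_mul_hurwitzSum {k : ℕ} (hk : 2 ≤ k) :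
    StrictMonoOn (fun x => x ^ k * hurwitzSum k x) (Ioi 0) := by
  intro a (ha : 0 < a) b (hb : 0 < b) hab
  have term (x : ℝ) (n : ℕ) : x ^ k * ((x + n) ^ k)⁻¹ = (x / (x + n)) ^ k := by
    rw [div_pow, div_eq_mul_inv]
  have ratio_le (n : ℕ) : a / (a + n) ≤ b / (b + n) := by
    rw [div_le_div_iff₀ (by positivity) (by positivity)]
    nlinarith [Nat.cast_nonneg (α := ℝ) n]
  have ratio_lt : a / (a + 1) < b / (b + 1) := by
    rw [div_lt_div_iff₀ (by positivity) (by positivity)]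
    linarith
  simp only [hurwitzSum, ← tsum_mul_left, term]
  refine Summable.tsum_lt_tsum (i := 1) (fun n => ?_) ?_ ?_ ?_
  · exact pow_le_pow_left₀ (by positivity) (ratio_le n) k
  · simpa using pow_lt_pow_left₀ ratio_lt (by positivity) (by omega)
  · simpa only [term] using (summable_inv_add_nat_pow hk ha).mul_left (a ^ k)
  · simpa only [term] using (summable_inv_add_nat_pow hk hb).mul_left (b ^ k)

noncomputable def digammaSeries (x : ℝ) : ℝ := ∑' m : ℕ, (((m : ℝ) + 1)⁻¹ - (x + m)⁻¹)

theorem hasDerivAt_logGammaSeq (n : ℕ) {y : ℝ} (hy : 0 < y) :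
    HasDerivAt (fun z => BohrMollerup.logGammaSeq z n)
      ((log n - harmonic (n + 1)) +
        ∑ m ∈ Finset.range (n + 1), (((m : ℝ) + 1)⁻¹ - (y + m)⁻¹)) y := by
  have hlog : HasDerivAt (fun z : ℝ => ∑ m ∈ Finset.range (n + 1), log (z + m))
      (∑ m ∈ Finset.range (n + 1), (y + m)⁻¹) y :=
    HasDerivAt.fun_sum fun m _ => by
      simpa using ((hasDerivAt_id y).add_const (m : ℝ)).log (by positivity)
  have h := (((hasDerivAt_id y).mul_const (log n)).add_const (log n.factorial)).sub hlog
  refine h.congr_deriv ?_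
  simp only [harmonic, Finset.sum_sub_distrib]
  push_cast
  ring

theorem tendsto_log_sub_harmonic_succ :
    Tendsto (fun n : ℕ => log n - harmonic (n + 1)) atTop (𝓝 (-eulerMascheroniConstant)) := by
  have h := (tendsto_harmonic_sub_log.add (tendsto_one_div_add_atTop_nhds_zero_nat (𝕜 := ℝ))).neg
  rw [add_zero] at h
  refine h.congr fun n => ?_
  simp only [harmonic_succ, Rat.cast_add, Rat.cast_inv, Rat.cast_natCast, Nat.cast_add,
    Nat.cast_one, one_div]
  ring

theorem norm_inv_add_one_sub_inv_add_le {d y M : ℝ} (hd : 0 < d) (hd1 : d ≤ 1) (hdy : d ≤ y)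
    (hyM : |y - 1| ≤ M) (m : ℕ) :
    ‖((m : ℝ) + 1)⁻¹ - (y + m)⁻¹‖ ≤ M * ((d + m) ^ 2)⁻¹ := by
  have hy : 0 < y := hd.trans_le hdy
  have h : ((m : ℝ) + 1)⁻¹ - (y + m)⁻¹ = (y - 1) / ((m + 1) * (y + m)) := by
    field_simp
    ring
  rw [h, norm_div, Real.norm_eq_abs, Real.norm_of_nonneg (by positivity), ← div_eq_mul_inv]
  refine div_le_div₀ ((abs_nonneg _).trans hyM) hyM (by positivity) ?_
  rw [sq]
  exact mul_le_mul (by linarith) (by linarith) (by positivity) (by positivity)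

theorem hasDerivAt_log_Gamma {x : ℝ} (hx : 0 < x) :
    HasDerivAt (fun y => log (Gamma y)) (-eulerMascheroniConstant + digammaSeries x) x := by
  set s := Ioo (x / 2) (x + 1)
  have hpos : ∀ y ∈ s, 0 < y := fun y hy => (half_pos hx).trans hy.1
  have hbound : ∀ (m : ℕ), ∀ y ∈ s, ‖((m : ℝ) + 1)⁻¹ - (y + m)⁻¹‖
      ≤ (x + 2) * ((min (x / 2) 1 + m) ^ 2)⁻¹ := fun m y hy =>
    norm_inv_add_one_sub_inv_add_le (by positivity) (min_le_right _ _)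
      ((min_le_left _ _).trans hy.1.le) (abs_le.2 ⟨by linarith [hy.1], by linarith [hy.2]⟩) m
  have hsum := tendstoUniformlyOn_tsum_nat
    ((summable_inv_add_nat_pow le_rfl (by positivity)).mul_left (x + 2)) hbound
  have hderiv : TendstoUniformlyOn
      (fun (n : ℕ) (y : ℝ) => (log n - harmonic (n + 1)) +
        ∑ m ∈ Finset.range (n + 1), (((m : ℝ) + 1)⁻¹ - (y + m)⁻¹))
      (fun y => -eulerMascheroniConstant + digammaSeries y) atTop s :=
    (tendsto_log_sub_harmonic_succ.tendstoUniformlyOn_const s).add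
      fun v hv => (tendsto_add_atTop_nat 1).eventually (hsum v hv)
  exact hasDerivAt_of_tendstoUniformlyOn isOpen_Ioo hderiv
    (.of_forall fun n y hy => hasDerivAt_logGammaSeq n (hpos y hy))
    (fun y hy => BohrMollerup.tendsto_log_gamma (hpos y hy)) ⟨by linarith, by linarith⟩

theorem hasDerivAt_digammaSeries {x : ℝ} (hx : 0 < x) :
    HasDerivAt digammaSeries (hurwitzSum 2 x) x := by
  obtain ⟨d, hd, hdx, hd1⟩ : ∃ d : ℝ, 0 < d ∧ d < x ∧ d < 1 :=
    ⟨min x 1 / 2, by positivity, by linarith [min_le_left x 1], by linarith [min_le_right x 1]⟩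
  unfold digammaSeries hurwitzSum
  refine hasDerivAt_tsum_of_isPreconnected (summable_inv_add_nat_pow le_rfl hd)
    (g := fun (m : ℕ) (z : ℝ) => ((m : ℝ) + 1)⁻¹ - (z + m)⁻¹)
    (g' := fun (m : ℕ) (z : ℝ) => ((z + m) ^ 2)⁻¹)
    isOpen_Ioi isPreconnected_Ioi (fun m y (hy : d < y) => ?_) (fun m y (hy : d < y) => ?_)
    hd1 ?_ hdx
  · have hym : y + m ≠ 0 := by linarith [hd.trans hy, m.cast_nonneg (α := ℝ)]
    simpa [neg_div] using (((hasDerivAt_id y).add_const (m : ℝ)).inv hym).const_sub (((m : ℝ) + 1)⁻¹)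
  · rw [Real.norm_of_nonneg (by positivity [hd.trans hy])]
    gcongr
  · simp [add_comm]

theorem hasDerivAt_digamma {x : ℝ} (hx : 0 < x) : HasDerivAt digamma (hurwitzSum 2 x) x := by
  have h : digamma =ᶠ[𝓝 x] fun y => -eulerMascheroniConstant + digammaSeries y :=
    (eventually_gt_nhds hx).mono fun y hy => (hasDerivAt_log_Gamma hy).deriv
  exact ((hasDerivAt_digammaSeries hx).const_add _).congr_of_eventuallyEq h

theorem polygamma_succ_eqOn (j : ℕ) :
    EqOn (polygamma (j + 1)) (fun x => (-1) ^ j * (j + 1).factorial * hurwitzSum (j + 2) x)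
      (Ioi 0) := by
  induction j with
  | zero =>
    intro x (hx : 0 < x)
    simp [polygamma, (hasDerivAt_digamma hx).deriv]
  | succ j ih =>
    intro x (hx : 0 < x)
    have h := ((hasDerivAt_hurwitzSum (by omega : 2 ≤ j + 2) hx).const_mul
      ((-1) ^ j * (j + 1).factorial : ℝ)).congr_of_eventuallyEq (ih.eventuallyEq_of_mem
        (Ioi_mem_nhds hx))
    rw [polygamma, iteratedDeriv_succ, ← polygamma, h.deriv, Nat.factorial_succ (j + 1)]
    push_cast
    ring

theorem abs_polygamma {i : ℕ} (hi : 0 < i) {x : ℝ} (hx : 0 < x) :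
    |polygamma i x| = i.factorial * hurwitzSum (i + 1) x := by
  obtain ⟨j, rfl⟩ : ∃ j, i = j + 1 := ⟨i - 1, by omega⟩
  rw [polygamma_succ_eqOn j hx, abs_mul, abs_mul, abs_pow, abs_neg, abs_one, one_pow, one_mul,
    Nat.abs_cast, abs_of_nonneg (hurwitzSum_nonneg _ hx)]

theorem one_le_pow_mul_abs_polygamma {i : ℕ} (hi : 0 < i) {x : ℝ} (hx : 0 < x) :
    1 ≤ x ^ (i + 1) * |polygamma i x| := by
  rw [abs_polygamma hi hx, mul_left_comm]
  exact one_le_mul_of_one_le_of_one_le (by exact_mod_cast i.factorial_pos)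
    (one_le_pow_mul_hurwitzSum (by omega) hx)

theorem strictMonoOn_pow_mul_abs_polygamma {i : ℕ} (hi : 0 < i) :
    StrictMonoOn (fun x => x ^ (i + 1) * |polygamma i x|) (Ioi 0) := by
  have h : EqOn (fun x => x ^ (i + 1) * |polygamma i x|)
      (fun x => i.factorial * (x ^ (i + 1) * hurwitzSum (i + 1) x)) (Ioi 0) := fun x hx => by
    simp only [abs_polygamma hi hx, mul_left_comm]
  rw [h.congr_strictMonoOn]
  exact (strictMono_mul_left_of_pos (by positivity)).comp_strictMonoOn
    (strictMonoOn_pow_mul_hurwitzSum (by omega : 2 ≤ i + 1))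

theorem StrictMonoOn.rpow_mul {f : ℝ → ℝ} (hf : StrictMonoOn f (Ioi 0))
    (hf0 : ∀ x ∈ Ioi 0, 0 < f x) {e : ℝ} (he : 0 ≤ e) :
    StrictMonoOn (fun x => x ^ e * f x) (Ioi 0) := fun a ha b hb hab =>
  calc a ^ e * f a < a ^ e * f b := by gcongr; exacts [rpow_pos_of_pos ha e, hf ha hb hab]
    _ ≤ b ^ e * f b := by gcongr; exacts [(hf0 b hb).le, le_of_lt ha]

theorem not_monotoneOn_of_rpow_le {f : ℝ → ℝ} {e : ℝ} (he : e < 0)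
    (hf : ∀ x ∈ Ioi 0, x ^ e ≤ f x) : ¬ MonotoneOn f (Ioi 0) := by
  intro hmono
  obtain ⟨x, hx_big, hx_mem⟩ := ((tendsto_rpow_neg_nhdsGT_zero he).eventually_gt_atTop (f 1)).and
    (Ioo_mem_nhdsGT one_pos) |>.exists
  have hx : x ∈ Ioi 0 := hx_mem.1
  linarith [hmono hx (mem_Ioi.2 one_pos) hx_mem.2.le, hf x hx]

theorem stmt2 (i : ℕ) (hi : 0 < i) (α : ℝ) :
    StrictMonoOn (fun x : ℝ => x ^ α * |polygamma i x|) (Set.Ioi 0) ↔ (i : ℝ) + 1 ≤ α := by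
  have hsplit : EqOn (fun x : ℝ => x ^ α * |polygamma i x|)
      (fun x => x ^ (α - (i + 1)) * (x ^ (i + 1) * |polygamma i x|)) (Ioi 0) := by
    intro x (hx : 0 < x)
    dsimp only
    rw [← mul_assoc, ← rpow_natCast, ← rpow_add hx]
    push_cast
    ring_nf
  rw [hsplit.congr_strictMonoOn]
  constructor
  · intro hmono
    by_contra! hα
    refine not_monotoneOn_of_rpow_le (sub_neg.2 hα) (fun x hx => ?_) hmono.monotoneOn
    exact le_mul_of_one_le_right (rpow_nonneg (le_of_lt hx) _)
      (one_le_pow_mul_abs_polygamma hi hx)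
  · intro hα
    exact (strictMonoOn_pow_mul_abs_polygamma hi).rpow_mul
      (fun x hx => one_pos.trans_le (one_le_pow_mul_abs_polygamma hi hx)) (sub_nonneg.2 hα)
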